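/- arXiv:2603.24301 — 3 statements merged into one kernel-verified Lean document; each statement's English description precedes it below -/
import Mathlib

section
/- Let p : ℝ³ → ℂ be a complex-valued homogeneous quadratic polynomial, p(x) = Σ_{1 ≤ i ≤ j ≤ 3} c_{ij} x_i x_j with c_{ij} ∈ ℂ. Then p is harmonic (Δp = 0) and horizontally conformal (κ(p,p) = 0 identically) if and only if there exists an isotropic vector v = (v₁,v₂,v₃) ∈ ℂ³, i.e. one with v₁² + v₂² + v₃² = 0, such that p(x) = (v₁x₁ + v₂x₂ + v₃x₃)² for all x ∈ ℝ³. In particular, the harmonic horizontally conformal quadratic polynomials on ℝ³ form a set parametrized by the two-dimensional complex variety of isotropic vectors in ℂ³. -/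
/-!
Write `p(x) = xᵀ M x` with `M` the symmetric complex matrix of `p`. Then `∇p = 2 M x`, so
`Δp = 2 tr M` and `κ(p, p) = 4 xᵀ M² x`; since a symmetric matrix is determined by its quadratic
form on `ℝⁿ`, `p` is harmonic and horizontally conformal iff `tr M = 0` and `M² = 0`. For a
symmetric `3 × 3` matrix these two conditions make every `2 × 2` minor vanish, so `M` has rank at
most one and, `ℂ` being algebraically closed, `M = v vᵀ`. Then `p(x) = (v · x)²` and
`v · v = tr M = 0`.
-/

/-- The partial derivative in direction `k` of a complex-valued function on `ℝᵐ`. -/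
noncomputable def pd {m : ℕ} (k : Fin m) (f : (Fin m → ℝ) → ℂ) : (Fin m → ℝ) → ℂ :=
  fun x => fderiv ℝ f x (Pi.single k 1)

/-- The Euclidean Laplacian `Δf = ∑ₖ ∂²f/∂xₖ²`. -/
noncomputable def lap {m : ℕ} (f : (Fin m → ℝ) → ℂ) : (Fin m → ℝ) → ℂ :=
  fun x => ∑ k : Fin m, pd k (pd k f) x

/-- The conformality operator `κ(f,g) = ∑ₖ (∂f/∂xₖ)(∂g/∂xₖ)`. -/
noncomputable def conf {m : ℕ} (f g : (Fin m → ℝ) → ℂ) : (Fin m → ℝ) → ℂ :=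
  fun x => ∑ k : Fin m, pd k f x * pd k g x

open Matrix

noncomputable def quadForm {m : ℕ} (A : Matrix (Fin m) (Fin m) ℂ) (x : Fin m → ℝ) : ℂ :=
  (Complex.ofReal ∘ x) ⬝ᵥ A *ᵥ (Complex.ofReal ∘ x)

section Calculus

variable {m : ℕ}

lemma hasFDerivAt_ofReal_apply (i : Fin m) (x : Fin m → ℝ) :
    HasFDerivAt (fun y : Fin m → ℝ => (y i : ℂ)) (Complex.ofRealCLM.comp (.proj i)) x :=
  Complex.ofRealCLM.hasFDerivAt.comp x (hasFDerivAt_apply i x)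

lemma pd_mulVec_ofReal (B : Matrix (Fin m) (Fin m) ℂ) (j k : Fin m) :
    pd k (fun x => (B *ᵥ (Complex.ofReal ∘ x)) j) = fun _ => B j k := by
  funext x
  have H := HasFDerivAt.fun_sum (u := .univ) fun l _ =>
    (hasFDerivAt_ofReal_apply l x).const_mul (B j l)
  simp only [mulVec, dotProduct, Function.comp_apply]
  rw [pd, H.fderiv]
  simp [Pi.single_apply, apply_ite Complex.ofReal]

lemma pd_quadForm (A : Matrix (Fin m) (Fin m) ℂ) (k : Fin m) :
    pd k (quadForm A) = fun x => ((A + Aᵀ) *ᵥ (Complex.ofReal ∘ x)) k := by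
  funext x
  have hQ : quadForm A = fun y => ∑ i, ∑ j, A i j * ((y i : ℂ) * (y j : ℂ)) := by
    funext y; simp [quadForm, dotProduct, mulVec, Finset.mul_sum, mul_left_comm]
  have H := HasFDerivAt.fun_sum (u := .univ) fun i _ => HasFDerivAt.fun_sum (u := .univ) fun j _ =>
    ((hasFDerivAt_ofReal_apply i x).fun_mul (hasFDerivAt_ofReal_apply j x)).const_mul (A i j)
  rw [hQ, pd, H.fderiv]
  simp [Pi.single_apply, mulVec, dotProduct, add_mul, Finset.sum_add_distrib,
    apply_ite Complex.ofReal, add_comm]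

lemma lap_quadForm (A : Matrix (Fin m) (Fin m) ℂ) (x : Fin m → ℝ) :
    lap (quadForm A) x = 2 * A.trace := by
  simp only [lap, pd_quadForm, pd_mulVec_ofReal]
  change (A + Aᵀ).trace = _
  rw [trace_add, trace_transpose, two_mul]

lemma conf_quadForm (A : Matrix (Fin m) (Fin m) ℂ) :
    conf (quadForm A) (quadForm A) = quadForm ((A + Aᵀ)ᵀ * (A + Aᵀ)) := by
  funext x
  simp only [conf, pd_quadForm, quadForm]
  rw [← mulVec_mulVec, dotProduct_mulVec, vecMul_transpose]
  rfl

end Calculus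

section QuadForm

variable {m : ℕ}

lemma quadForm_vecMulVec_self (v : Fin m → ℂ) (x : Fin m → ℝ) :
    quadForm (vecMulVec v v) x = (v ⬝ᵥ (Complex.ofReal ∘ x)) ^ 2 := by
  rw [quadForm, vecMulVec_mulVec, dotProduct_smul]
  simp [dotProduct_comm, sq]

lemma two_mul_apply_eq_quadForm {A : Matrix (Fin m) (Fin m) ℂ} (hA : A.IsSymm) (i j : Fin m) :
    2 * A i j = quadForm A (Pi.single i 1 + Pi.single j 1) - quadForm A (Pi.single i 1)
      - quadForm A (Pi.single j 1) := by
  have hsingle : ∀ l : Fin m, Complex.ofReal ∘ Pi.single l 1 = Pi.single l 1 := fun l => by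
    funext l'; simp [Pi.single_apply, apply_ite Complex.ofReal]
  have hcomp : Complex.ofReal ∘ (Pi.single i (1 : ℝ) + Pi.single j 1) =
      Pi.single i 1 + Pi.single j 1 := by
    rw [← hsingle i, ← hsingle j]; funext l; simp
  simp only [quadForm, hcomp, hsingle, mulVec_add, dotProduct_add, add_dotProduct,
    mulVec_single_one, single_dotProduct, col_apply, one_mul, hA.apply j i]
  ring

lemma quadForm_inj {A B : Matrix (Fin m) (Fin m) ℂ} (hA : A.IsSymm) (hB : B.IsSymm) :
    quadForm A = quadForm B ↔ A = B := by
  refine ⟨fun h => ?_, congrArg quadForm⟩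
  ext i j
  have h2 : (2 : ℂ) * A i j = 2 * B i j := by
    rw [two_mul_apply_eq_quadForm hA, two_mul_apply_eq_quadForm hB, h]
  exact mul_left_cancel₀ two_ne_zero h2

lemma harmonic_and_conformal_quadForm_iff {M : Matrix (Fin m) (Fin m) ℂ} (hM : M.IsSymm) :
    ((∀ x, lap (quadForm M) x = 0) ∧ (∀ x, conf (quadForm M) (quadForm M) x = 0)) ↔
      M.trace = 0 ∧ M * M = 0 := by
  have hconf : conf (quadForm M) (quadForm M) = quadForm ((4 : ℂ) • (M * M)) := by
    rw [conf_quadForm, hM.eq, ← two_smul ℂ M, transpose_smul, hM.eq, smul_mul_smul_comm]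
    norm_num
  have hsq : ((4 : ℂ) • (M * M)).IsSymm := by
    rw [IsSymm, transpose_smul, transpose_mul, hM.eq]
  have hzero : quadForm (0 : Matrix (Fin m) (Fin m) ℂ) = 0 := by
    funext x; simp [quadForm]
  refine and_congr (by simp [lap_quadForm]) ?_
  rw [hconf]
  calc (∀ x, quadForm ((4 : ℂ) • (M * M)) x = 0)
      ↔ quadForm ((4 : ℂ) • (M * M)) = quadForm 0 := by simp [funext_iff, hzero]
    _ ↔ M * M = 0 := by rw [quadForm_inj hsq isSymm_zero, smul_eq_zero]; norm_num

end QuadForm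

section Algebra

variable {K : Type*} [Field K]

lemma exists_eq_vecMulVec_self_of_minors [IsAlgClosed K] {n : Type*} {M : Matrix n n K}
    (hminor : ∀ i j k, M i i * M j k = M i j * M i k) :
    ∃ v, M = vecMulVec v v := by
  by_cases hdiag : ∃ i, M i i ≠ 0
  · obtain ⟨i, hi⟩ := hdiag
    obtain ⟨w, hw⟩ := IsAlgClosed.exists_pow_nat_eq (M i i) two_pos
    refine ⟨fun j => M i j / w, ?_⟩
    ext j k
    rw [vecMulVec_apply, div_mul_div_comm, ← sq, hw, eq_div_iff hi, mul_comm, hminor]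
  · push Not at hdiag
    refine ⟨0, ?_⟩
    ext j k
    have h := hminor j k k
    rw [hdiag j, zero_mul, eq_comm, mul_self_eq_zero] at h
    simp [h]

/- Each `2 × 2` minor is a combination of the entries of `M * M` and of `tr M`, e.g.
`2 (M₀₀ M₁₁ - M₀₁²) = (M²)₂₂ - (M²)₀₀ - (M²)₁₁ + (M₀₀ + M₁₁ - M₂₂) tr M`. -/
lemma minors_eq_of_trace_eq_zero_of_mul_self_eq_zero [NeZero (2 : K)]
    {M : Matrix (Fin 3) (Fin 3) K} (hM : M.IsSymm) (htr : M.trace = 0) (hsq : M * M = 0) :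
    ∀ i j k, M i i * M j k = M i j * M i k := by
  have hsymm : ∀ i j, M j i = M i j := IsSymm.ext_iff.mp hM
  have hentry : ∀ i j, ∑ l, M i l * M l j = 0 := fun i j => by
    simpa [mul_apply] using congrFun₂ hsq i j
  simp only [Fin.sum_univ_three] at hentry
  rw [trace_fin_three] at htr
  intro i j k
  fin_cases i <;> fin_cases j <;> fin_cases k <;> grind

lemma trace_eq_zero_and_mul_self_eq_zero_iff [IsAlgClosed K] [NeZero (2 : K)]
    {M : Matrix (Fin 3) (Fin 3) K} (hM : M.IsSymm) :
    M.trace = 0 ∧ M * M = 0 ↔ ∃ v, v ⬝ᵥ v = 0 ∧ M = vecMulVec v v := by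
  constructor
  · rintro ⟨htr, hsq⟩
    obtain ⟨v, rfl⟩ := exists_eq_vecMulVec_self_of_minors
      (minors_eq_of_trace_eq_zero_of_mul_self_eq_zero hM htr hsq)
    exact ⟨v, by rwa [trace_vecMulVec] at htr, rfl⟩
  · rintro ⟨v, hv, rfl⟩
    rw [trace_vecMulVec, vecMulVec_mul_vecMulVec, hv, zero_smul, vecMulVec_zero]
    exact ⟨rfl, rfl⟩

end Algebra

theorem stmt3 (c00 c01 c02 c11 c12 c22 : ℂ)
    (p : (Fin 3 → ℝ) → ℂ)
    (hp : ∀ x, p x = c00 * (x 0 : ℂ) ^ 2 + c11 * (x 1 : ℂ) ^ 2 + c22 * (x 2 : ℂ) ^ 2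
        + c01 * ((x 0 : ℂ) * (x 1 : ℂ)) + c02 * ((x 0 : ℂ) * (x 2 : ℂ))
        + c12 * ((x 1 : ℂ) * (x 2 : ℂ))) :
    ((∀ x, lap p x = 0) ∧ (∀ x, conf p p x = 0)) ↔
      ∃ v : Fin 3 → ℂ, v 0 ^ 2 + v 1 ^ 2 + v 2 ^ 2 = 0 ∧
        ∀ x : Fin 3 → ℝ, p x = (v 0 * (x 0 : ℂ) + v 1 * (x 1 : ℂ) + v 2 * (x 2 : ℂ)) ^ 2 := by
  set M : Matrix (Fin 3) (Fin 3) ℂ :=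
    !![c00, c01 / 2, c02 / 2; c01 / 2, c11, c12 / 2; c02 / 2, c12 / 2, c22]
  have hM : M.IsSymm := by ext i j; fin_cases i <;> fin_cases j <;> rfl
  have hpM : p = quadForm M := by
    funext x
    rw [hp]
    simp only [quadForm, M, dotProduct, mulVec, Fin.sum_univ_three, Function.comp_apply, of_apply,
      cons_val', cons_val_fin_one, cons_val_zero, cons_val_one, cons_val]
    ring
  have hsquare (v : Fin 3 → ℂ) : (fun x : Fin 3 → ℝ =>
      (v 0 * (x 0 : ℂ) + v 1 * (x 1 : ℂ) + v 2 * (x 2 : ℂ)) ^ 2) = quadForm (vecMulVec v v) := by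
    funext x; simp [quadForm_vecMulVec_self, dotProduct, Fin.sum_univ_three]
  rw [hpM, harmonic_and_conformal_quadForm_iff hM, trace_eq_zero_and_mul_self_eq_zero_iff hM]
  refine exists_congr fun v => and_congr ?_ ?_
  · simp [dotProduct, Fin.sum_univ_three, sq]
  · rw [← funext_iff, hsquare, quadForm_inj hM (transpose_vecMulVec v v)]
end

section
/- Let φ : ℝᵃ → ℂ and ψ, χ : ℝᵇ → ℂ be smooth functions satisfying Δφ = 0, Δψ = 0, Δχ = 0, and κ(φ,φ) = 0, κ(ψ,ψ) = 0, κ(ψ,χ) = 0, κ(χ,χ) = 0 (each κ and Δ taken in the respective variables). Define F, G : ℝᵃ × ℝᵇ ≅ ℝ^{a+b} → ℂ by F(x,y) = φ(x) + ψ(y) and G(x,y) = χ(y). Then on ℝ^{a+b} one has ΔF = 0, ΔG = 0, κ(F,F) = 0, κ(F,G) = 0 and κ(G,G) = 0, where Δ and κ are taken with respect to all a+b real coordinates. -/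
noncomputable def La (a b : ℕ) : ((Fin (a+b) → ℝ)) →L[ℝ] (Fin a → ℝ) :=
  ContinuousLinearMap.pi (fun i => ContinuousLinearMap.proj (Fin.castAdd b i))

noncomputable def Lb (a b : ℕ) : ((Fin (a+b) → ℝ)) →L[ℝ] (Fin b → ℝ) :=
  ContinuousLinearMap.pi (fun j => ContinuousLinearMap.proj (Fin.natAdd a j))

lemma La_apply {a b : ℕ} (x : Fin (a+b) → ℝ) : La a b x = fun i => x (Fin.castAdd b i) := rfl
lemma Lb_apply {a b : ℕ} (x : Fin (a+b) → ℝ) : Lb a b x = fun j => x (Fin.natAdd a j) := rfl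

lemma La_single_cast {a b : ℕ} (i : Fin a) :
    La a b (Pi.single (Fin.castAdd b i) 1) = Pi.single i 1 := by
  funext i'
  simp [La, Pi.single_apply, Fin.ext_iff]

lemma La_single_nat {a b : ℕ} (j : Fin b) :
    La a b (Pi.single (Fin.natAdd a j) 1) = 0 := by
  funext i'
  simp [La, Pi.single_apply, Fin.ext_iff]
  omega

lemma Lb_single_cast {a b : ℕ} (i : Fin a) :
    Lb a b (Pi.single (Fin.castAdd b i) 1) = 0 := by
  funext j'
  simp [Lb, Pi.single_apply, Fin.ext_iff]
  omega

lemma Lb_single_nat {a b : ℕ} (j : Fin b) :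
    Lb a b (Pi.single (Fin.natAdd a j) 1) = Pi.single j 1 := by
  funext j'
  simp [Lb, Pi.single_apply, Fin.ext_iff]

lemma pd_contDiff {m : ℕ} (k : Fin m) {f : (Fin m → ℝ) → ℂ} (hf : ContDiff ℝ (⊤ : ℕ∞) f) :
    ContDiff ℝ (⊤ : ℕ∞) (pd k f) :=
  (hf.fderiv_right (by simp)).clm_apply contDiff_const

lemma pd_add {m : ℕ} (k : Fin m) {f g : (Fin m → ℝ) → ℂ} {x : Fin m → ℝ}
    (hf : DifferentiableAt ℝ f x) (hg : DifferentiableAt ℝ g x) :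
    pd k (fun y => f y + g y) x = pd k f x + pd k g x := by
  simp [pd, fderiv_fun_add hf hg]

lemma pd_comp {m n : ℕ} (k : Fin m) (L : ((Fin m → ℝ)) →L[ℝ] (Fin n → ℝ))
    {f : (Fin n → ℝ) → ℂ} (x : Fin m → ℝ) (hf : DifferentiableAt ℝ f (L x)) :
    pd k (fun y => f (L y)) x = fderiv ℝ f (L x) (L (Pi.single k 1)) := by
  unfold pd
  rw [show (fun y => f (L y)) = f ∘ L from rfl, fderiv_comp x hf L.differentiableAt,
    L.fderiv]
  rfl

lemma pd_const {m : ℕ} (k : Fin m) (c : ℂ) (x : Fin m → ℝ) :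
    pd k (fun _ => c) x = 0 := by
  simp [pd]

theorem stmt6 (a b : ℕ)
    (φ : (Fin a → ℝ) → ℂ) (ψ χ : (Fin b → ℝ) → ℂ)
    (hφ : ContDiff ℝ (⊤ : ℕ∞) φ) (hψ : ContDiff ℝ (⊤ : ℕ∞) ψ) (hχ : ContDiff ℝ (⊤ : ℕ∞) χ)
    (hφl : ∀ x, lap φ x = 0) (hψl : ∀ y, lap ψ y = 0) (hχl : ∀ y, lap χ y = 0)
    (hφc : ∀ x, conf φ φ x = 0) (hψc : ∀ y, conf ψ ψ y = 0)
    (hψχ : ∀ y, conf ψ χ y = 0) (hχc : ∀ y, conf χ χ y = 0)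
    (F G : (Fin (a + b) → ℝ) → ℂ)
    (hF : ∀ x, F x = φ (fun i => x (Fin.castAdd b i)) + ψ (fun j => x (Fin.natAdd a j)))
    (hG : ∀ x, G x = χ (fun j => x (Fin.natAdd a j))) :
    (∀ x, lap F x = 0) ∧ (∀ x, lap G x = 0) ∧
    (∀ x, conf F F x = 0) ∧ (∀ x, conf F G x = 0) ∧ (∀ x, conf G G x = 0) := by
  have hφd := hφ.differentiable (by simp)
  have hψd := hψ.differentiable (by simp)
  have hχd := hχ.differentiable (by simp)
  have hF' : F = fun x => φ (La a b x) + ψ (Lb a b x) := funext hF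
  have hG' : G = fun x => χ (Lb a b x) := funext hG
  have hdφL : ∀ x, DifferentiableAt ℝ (fun y => φ (La a b y)) x :=
    fun x => (hφd (La a b x)).comp x (La a b).differentiableAt
  have hdψL : ∀ x, DifferentiableAt ℝ (fun y => ψ (Lb a b y)) x :=
    fun x => (hψd (Lb a b x)).comp x (Lb a b).differentiableAt
  -- first derivatives of F
  have pdF_cast : ∀ i : Fin a, pd (Fin.castAdd b i) F = fun x => pd i φ (La a b x) := by
    intro i; funext x
    rw [hF', pd_add _ (hdφL x) (hdψL x),
      pd_comp _ _ _ (hφd _), pd_comp _ _ _ (hψd _), La_single_cast, Lb_single_cast]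
    simp [pd]
  have pdF_nat : ∀ j : Fin b, pd (Fin.natAdd a j) F = fun x => pd j ψ (Lb a b x) := by
    intro j; funext x
    rw [hF', pd_add _ (hdφL x) (hdψL x),
      pd_comp _ _ _ (hφd _), pd_comp _ _ _ (hψd _), La_single_nat, Lb_single_nat]
    simp [pd]
  have pdG_cast : ∀ i : Fin a, pd (Fin.castAdd b i) G = fun _ => 0 := by
    intro i; funext x
    rw [hG', pd_comp _ _ _ (hχd _), Lb_single_cast]
    simp
  have pdG_nat : ∀ j : Fin b, pd (Fin.natAdd a j) G = fun x => pd j χ (Lb a b x) := by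
    intro j; funext x
    rw [hG', pd_comp _ _ _ (hχd _), Lb_single_nat]
    rfl
  -- second derivatives
  have pd2F_cast : ∀ (i : Fin a) x,
      pd (Fin.castAdd b i) (pd (Fin.castAdd b i) F) x = pd i (pd i φ) (La a b x) := by
    intro i x
    rw [pdF_cast i, pd_comp _ _ _ ((pd_contDiff i hφ).differentiable (by simp) _), La_single_cast]
    rfl
  have pd2F_nat : ∀ (j : Fin b) x,
      pd (Fin.natAdd a j) (pd (Fin.natAdd a j) F) x = pd j (pd j ψ) (Lb a b x) := by
    intro j x
    rw [pdF_nat j, pd_comp _ _ _ ((pd_contDiff j hψ).differentiable (by simp) _), Lb_single_nat]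
    rfl
  have pd2G_cast : ∀ (i : Fin a) x,
      pd (Fin.castAdd b i) (pd (Fin.castAdd b i) G) x = 0 := by
    intro i x
    rw [pdG_cast i, pd_const]
  have pd2G_nat : ∀ (j : Fin b) x,
      pd (Fin.natAdd a j) (pd (Fin.natAdd a j) G) x = pd j (pd j χ) (Lb a b x) := by
    intro j x
    rw [pdG_nat j, pd_comp _ _ _ ((pd_contDiff j hχ).differentiable (by simp) _), Lb_single_nat]
    rfl
  refine ⟨?_, ?_, ?_, ?_, ?_⟩
  · intro x
    have := hφl (La a b x); have := hψl (Lb a b x)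
    simp only [lap, Fin.sum_univ_add, pd2F_cast, pd2F_nat] at *
    simp_all
  · intro x
    have := hχl (Lb a b x)
    simp only [lap, Fin.sum_univ_add, pd2G_cast, pd2G_nat] at *
    simp_all
  · intro x
    have := hφc (La a b x); have := hψc (Lb a b x)
    simp only [conf, Fin.sum_univ_add, pdF_cast, pdF_nat] at *
    simp_all
  · intro x
    have := hψχ (Lb a b x)
    simp only [conf, Fin.sum_univ_add, pdF_cast, pdF_nat, pdG_cast, pdG_nat] at *
    simp_all
  · intro x
    have := hχc (Lb a b x)
    simp only [conf, Fin.sum_univ_add, pdG_cast, pdG_nat] at *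
    simp_all
end

section
/- Let p : ℝ³ → ℂ be a smooth function with κ(p,p) = 0 (in the three real variables), and define Φ on the open set Ω = {x ∈ ℝ⁵ : (x₄,x₅) ≠ (0,0)} by Φ(x) = p(x₁,x₂,x₃)/(x₄ + i x₅)². Then: (i) at any point x ∈ Ω where all five complex partial derivatives of Φ vanish, one has Φ(x) = 0, so 0 ∈ ℂ is the only possible critical value of Φ; and (ii) for every α ∈ ℂ with α ≠ 0 and every x ∈ Ω with Φ(x) = α, the real Fréchet derivative dΦ_x : ℝ⁵ → ℂ ≅ ℝ² is surjective, so the fibre Φ⁻¹({α}) consists entirely of regular points. -/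
open Complex ContinuousLinearMap in
theorem key_aux (p : (Fin 3 → ℝ) → ℂ) (hp : ContDiff ℝ (⊤ : ℕ∞) p)
    (Φ : (Fin 5 → ℝ) → ℂ)
    (hΦ : ∀ x, Φ x = p (fun i => x ⟨(i : ℕ), lt_of_lt_of_le i.isLt (by norm_num)⟩) /
        ((x 3 : ℂ) + Complex.I * (x 4 : ℂ)) ^ 2)
    (x : Fin 5 → ℝ) (hx : (x 3, x 4) ≠ (0, 0)) :
    fderiv ℝ Φ x (Pi.single 3 1) = -2 * Φ x * ((x 3 : ℂ) + Complex.I * x 4)⁻¹ ∧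
    fderiv ℝ Φ x (Pi.single 4 1) =
      Complex.I * (-2 * Φ x * ((x 3 : ℂ) + Complex.I * x 4)⁻¹) := by
  set w : ℂ := (x 3 : ℂ) + Complex.I * x 4 with hw_def
  have hw0 : w ≠ 0 := by
    intro h
    apply hx
    have hre := congrArg Complex.re h
    have him := congrArg Complex.im h
    simp [hw_def] at hre him
    simp [hre, him]
  -- linear maps
  set L : (Fin 5 → ℝ) →L[ℝ] (Fin 3 → ℝ) :=
    ContinuousLinearMap.pi (fun i : Fin 3 =>
      ContinuousLinearMap.proj (Fin.castLE (by norm_num) i)) with hL_def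
  set W : ((Fin 5 → ℝ) →L[ℝ] ℂ) :=
    (ContinuousLinearMap.proj (R := ℝ) (φ := fun _ : Fin 5 => ℝ) 3).smulRight 1 +
    (ContinuousLinearMap.proj (R := ℝ) (φ := fun _ : Fin 5 => ℝ) 4).smulRight Complex.I
    with hW_def
  have hWfun : (fun y : Fin 5 → ℝ => (y 3 : ℂ) + Complex.I * y 4) = fun y => W y := by
    funext y
    simp [hW_def, Complex.real_smul]
    ring
  have hw : HasFDerivAt (fun y : Fin 5 → ℝ => (y 3 : ℂ) + Complex.I * y 4) W x := by
    rw [hWfun]; exact W.hasFDerivAt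
  have hg : HasFDerivAt (fun y : Fin 5 → ℝ => ((y 3 : ℂ) + Complex.I * y 4) ^ 2)
      (((x 3 : ℂ) + Complex.I * x 4) • W + ((x 3 : ℂ) + Complex.I * x 4) • W) x := by
    exact (hw.mul hw).congr_of_eventuallyEq (Filter.Eventually.of_forall fun y => pow_two _)
  have hg0 : w ^ 2 ≠ 0 := pow_ne_zero _ hw0
  have hinv : HasFDerivAt (fun z : ℂ => z⁻¹)
      (((smulRight (1 : ℂ →L[ℂ] ℂ) (-((w ^ 2) ^ 2)⁻¹)) : ℂ →L[ℂ] ℂ).restrictScalars ℝ)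
      (w ^ 2) := (hasFDerivAt_inv hg0).restrictScalars ℝ
  have hginv : HasFDerivAt (fun y : Fin 5 → ℝ => (((y 3 : ℂ) + Complex.I * y 4) ^ 2)⁻¹)
      ((((smulRight (1 : ℂ →L[ℂ] ℂ) (-((w ^ 2) ^ 2)⁻¹)) : ℂ →L[ℂ] ℂ).restrictScalars ℝ).comp
        (w • W + w • W)) x := hinv.comp x hg
  have hq : HasFDerivAt (fun y : Fin 5 → ℝ => p (L y)) ((fderiv ℝ p (L x)).comp L) x :=
    ((hp.differentiable (by simp) (L x)).hasFDerivAt).comp x L.hasFDerivAt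
  have hmul := hq.mul hginv
  have hΦfun : Φ = fun y : Fin 5 → ℝ => p (L y) * (((y 3 : ℂ) + Complex.I * y 4) ^ 2)⁻¹ := by
    funext y
    rw [hΦ y, div_eq_mul_inv]
    rfl
  have hD : HasFDerivAt Φ
      (p (L x) • ((((smulRight (1 : ℂ →L[ℂ] ℂ) (-((w ^ 2) ^ 2)⁻¹)) : ℂ →L[ℂ] ℂ).restrictScalars
          ℝ).comp (w • W + w • W)) +
        (((x 3 : ℂ) + Complex.I * x 4) ^ 2)⁻¹ • (fderiv ℝ p (L x)).comp L) x := by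
    rw [hΦfun]; exact hmul
  have hfd := hD.fderiv
  have hLe3 : L (Pi.single (3 : Fin 5) (1 : ℝ)) = 0 := by
    funext i
    fin_cases i <;> simp [hL_def, Pi.single_apply, Fin.ext_iff] <;> decide
  have hLe4 : L (Pi.single (4 : Fin 5) (1 : ℝ)) = 0 := by
    funext i
    fin_cases i <;> simp [hL_def, Pi.single_apply, Fin.ext_iff] <;> decide
  have hWe3 : W (Pi.single (3 : Fin 5) (1 : ℝ)) = 1 := by
    norm_num [hW_def, Pi.single_apply, Fin.ext_iff] <;> decide
  have hWe4 : W (Pi.single (4 : Fin 5) (1 : ℝ)) = Complex.I := by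
    norm_num [hW_def, Pi.single_apply, Fin.ext_iff] <;> decide
  have hΦx : Φ x = p (L x) * (w ^ 2)⁻¹ := by rw [hΦfun]
  constructor
  · rw [hfd]
    simp only [ContinuousLinearMap.add_apply, ContinuousLinearMap.smul_apply,
      ContinuousLinearMap.comp_apply, ContinuousLinearMap.coe_restrictScalars',
      ContinuousLinearMap.smulRight_apply, ContinuousLinearMap.one_apply,
      hLe3, hWe3, map_zero, smul_eq_mul]
    rw [hΦx]
    field_simp
    ring
  · rw [hfd]
    simp only [ContinuousLinearMap.add_apply, ContinuousLinearMap.smul_apply,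
      ContinuousLinearMap.comp_apply, ContinuousLinearMap.coe_restrictScalars',
      ContinuousLinearMap.smulRight_apply, ContinuousLinearMap.one_apply,
      hLe4, hWe4, map_zero, smul_eq_mul]
    rw [hΦx]
    field_simp
    ring

theorem stmt12 (p : (Fin 3 → ℝ) → ℂ) (hp : ContDiff ℝ (⊤ : ℕ∞) p)
    (hpc : ∀ x, conf p p x = 0)
    (Φ : (Fin 5 → ℝ) → ℂ)
    (hΦ : ∀ x, Φ x = p (fun i => x ⟨(i : ℕ), by have := i.isLt; omega⟩) /
        ((x 3 : ℂ) + Complex.I * (x 4 : ℂ)) ^ 2) :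
    (∀ x : Fin 5 → ℝ, (x 3, x 4) ≠ (0, 0) → (∀ k, pd k Φ x = 0) → Φ x = 0) ∧
    (∀ α : ℂ, α ≠ 0 → ∀ x : Fin 5 → ℝ, (x 3, x 4) ≠ (0, 0) → Φ x = α →
      Function.Surjective (fderiv ℝ Φ x)) := by
  constructor
  · intro x hx hpd
    obtain ⟨h3, _⟩ := key_aux p hp Φ hΦ x hx
    have h := hpd 3
    simp only [pd] at h
    rw [h3] at h
    have hw0 : ((x 3 : ℂ) + Complex.I * x 4) ≠ 0 := by
      intro h0
      apply hx
      have hre := congrArg Complex.re h0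
      have him := congrArg Complex.im h0
      simp at hre him
      simp [hre, him]
    have : ((x 3 : ℂ) + Complex.I * x 4)⁻¹ ≠ 0 := inv_ne_zero hw0
    rcases mul_eq_zero.1 h with h' | h'
    · rcases mul_eq_zero.1 h' with h'' | h''
      · norm_num at h''
      · exact h''
    · exact absurd h' this
  · intro α hα x hx hΦx
    obtain ⟨h3, h4⟩ := key_aux p hp Φ hΦ x hx
    have hw0 : ((x 3 : ℂ) + Complex.I * x 4) ≠ 0 := by
      intro h0
      apply hx
      have hre := congrArg Complex.re h0
      have him := congrArg Complex.im h0
      simp at hre him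
      simp [hre, him]
    set v : ℂ := -2 * Φ x * ((x 3 : ℂ) + Complex.I * x 4)⁻¹ with hv_def
    have hv0 : v ≠ 0 := by
      rw [hv_def, hΦx]
      exact mul_ne_zero (mul_ne_zero (by norm_num) hα) (inv_ne_zero hw0)
    intro z
    refine ⟨((z / v).re • (Pi.single 3 1 : Fin 5 → ℝ) + (z / v).im • (Pi.single 4 1 : Fin 5 → ℝ)), ?_⟩
    rw [map_add, map_smul, map_smul, h3, h4]
    rw [Complex.real_smul, Complex.real_smul]
    calc ((z / v).re : ℂ) * v + ((z / v).im : ℂ) * (Complex.I * v)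
        = (((z / v).re : ℂ) + ((z / v).im : ℂ) * Complex.I) * v := by ring
      _ = (z / v) * v := by rw [Complex.re_add_im]
      _ = z := div_mul_cancel₀ z hv0
end
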